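/- arXiv:1204.1688 — 6 statements merged into one kernel-verified Lean document; each statement's English description precedes it below -/
import Mathlib

section
/- Let p ∈ [0,1]^m and for a permutation π of {1,…,m} define R(π) = Σ_{i=1}^m (1/F(i)) · p_{π⁻¹(i)} · Π_{j=1}^{i-1} (1 - p_{π⁻¹(j)}), where F : ℕ → [1,∞) is strictly increasing. Then R(π) is maximized by any permutation that orders the items in decreasing order of p_i; i.e., if π sorts p in decreasing order (p_{π⁻¹(1)} ≥ p_{π⁻¹(2)} ≥ ⋯ ≥ p_{π⁻¹(m)}), then R(π) ≥ R(σ) for every permutation σ. -/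
/-! Swapping two adjacent items whose satisfaction probabilities increase, `f a < f (a+1)`,
changes the reward by `(f (a+1) - f a) * (w a - w (a+1)) * ∏ j < a, (1 - f j) ≥ 0`, because the
position weights `w = 1 / F (· + 1)` decrease. Among the orderings of maximal reward take one
minimizing `∑ i, i * f i`; that potential drops under such a swap, so the ordering has no adjacent
ascent, i.e. it is the sorted one. -/

open Finset

/-- The expected reciprocal rank reward of an ordering `π` under a cascade model:
`R(π) = ∑ i, (1/F(i)) p_{π⁻¹(i)} ∏_{j<i} (1 - p_{π⁻¹(j)})`, where `π.symm i` is the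
item placed at position `i` (positions are 0-indexed; `F` is evaluated at `i+1`). -/
noncomputable def errReward (m : ℕ) (p : Fin m → ℝ) (F : ℕ → ℝ)
    (π : Equiv.Perm (Fin m)) : ℝ :=
  ∑ i : Fin m, (1 / F ((i : ℕ) + 1)) * p (π.symm i) *
    ∏ j ∈ Finset.Iio i, (1 - p (π.symm j))

open Equiv

theorem Fintype.sum_sub_sum_eq_of_eq_off_pair {ι M : Type*} [Fintype ι] [AddCommGroup M]
    {g h : ι → M} {a b : ι} (hab : a ≠ b) (hgh : ∀ x, x ≠ a ∧ x ≠ b → g x = h x) :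
    ∑ x, g x - ∑ x, h x = (g a - h a) + (g b - h b) := by
  rw [← Finset.sum_sub_distrib]
  exact Fintype.sum_eq_add a b hab fun x hx => sub_eq_zero.2 (hgh x hx)

noncomputable def cascadeReward {m : ℕ} (w f : Fin m → ℝ) : ℝ :=
  ∑ i, w i * f i * ∏ j ∈ Iio i, (1 - f j)

theorem errReward_eq_cascadeReward (m : ℕ) (p : Fin m → ℝ) (F : ℕ → ℝ) (σ : Perm (Fin m)) :
    errReward m p F σ = cascadeReward (fun i => 1 / F ((i : ℕ) + 1)) (p ∘ σ.symm) :=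
  rfl

noncomputable def positionSum {m : ℕ} (f : Fin m → ℝ) : ℝ :=
  ∑ i : Fin m, ((i : ℕ) : ℝ) * f i

section AdjacentSwap

variable {n : ℕ} (f : Fin (n + 1) → ℝ) (i : Fin n)

theorem positionSum_comp_swap :
    positionSum (f ∘ swap i.castSucc i.succ) = positionSum f + (f i.castSucc - f i.succ) := by
  rw [← sub_eq_iff_eq_add', positionSum, positionSum,
    Fintype.sum_sub_sum_eq_of_eq_off_pair (Fin.castSucc_lt_succ (i := i)).ne
      fun x hx => by rw [Function.comp_apply, swap_apply_of_ne_of_ne hx.1 hx.2]]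
  simp only [Function.comp_apply, swap_apply_left, swap_apply_right, Fin.val_succ,
    Fin.val_castSucc]
  push_cast
  ring

theorem prod_Iio_comp_swap {M : Type*} [CommMonoid M] (g : Fin (n + 1) → M) {x : Fin (n + 1)}
    (hx : x ≠ i.castSucc ∧ x ≠ i.succ) :
    ∏ j ∈ Iio x, g (swap i.castSucc i.succ j) = ∏ j ∈ Iio x, g j := by
  refine prod_equiv (swap i.castSucc i.succ) (fun j => ?_) fun _ _ => rfl
  simp only [mem_Iio, swap_apply_def]
  obtain ⟨hxa, hxb⟩ := hx
  simp only [ne_eq, Fin.ext_iff, Fin.val_succ, Fin.val_castSucc] at hxa hxb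
  split_ifs <;>
    simp only [Fin.lt_def, Fin.ext_iff, Fin.val_succ, Fin.val_castSucc] at * <;> omega

theorem cascadeReward_comp_swap_sub (w : Fin (n + 1) → ℝ) :
    cascadeReward w (f ∘ swap i.castSucc i.succ) - cascadeReward w f =
      (f i.succ - f i.castSucc) * (w i.castSucc - w i.succ) *
        ∏ j ∈ Iio i.castSucc, (1 - f j) := by
  set s := swap i.castSucc i.succ
  have hfix : ∀ j ∈ Iio i.castSucc, f (s j) = f j := fun j hj =>
    congrArg f (swap_apply_of_ne_of_ne (mem_Iio.1 hj).ne (mem_Iio.1 hj |>.trans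
      (Fin.castSucc_lt_succ (i := i))).ne)
  have hIio : Iio i.succ = insert i.castSucc (Iio i.castSucc) := by
    ext j
    simp only [mem_Iio, mem_insert, Fin.lt_def, Fin.ext_iff, Fin.val_succ, Fin.val_castSucc]
    omega
  rw [cascadeReward, cascadeReward, Fintype.sum_sub_sum_eq_of_eq_off_pair
      (Fin.castSucc_lt_succ (i := i)).ne fun x hx => by
        simp only [Function.comp_apply, s, swap_apply_of_ne_of_ne hx.1 hx.2]
        exact congrArg _ (prod_Iio_comp_swap i (fun j => 1 - f j) hx)]
  simp only [hIio, prod_insert notMem_Iio_self, Function.comp_apply, s, swap_apply_left,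
    swap_apply_right, prod_congr rfl fun j hj => congrArg (1 - ·) (hfix j hj)]
  ring

end AdjacentSwap

theorem cascadeReward_le_comp_swap {n : ℕ} {w f : Fin (n + 1) → ℝ} (hw : Antitone w)
    (hf : ∀ j, f j ≤ 1) {i : Fin n} (hi : f i.castSucc ≤ f i.succ) :
    cascadeReward w f ≤ cascadeReward w (f ∘ swap i.castSucc i.succ) := by
  rw [← sub_nonneg, cascadeReward_comp_swap_sub]
  exact mul_nonneg (mul_nonneg (sub_nonneg.2 hi) (sub_nonneg.2 (hw Fin.castSucc_lt_succ.le)))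
    (prod_nonneg fun j _ => sub_nonneg.2 (hf j))

theorem cascadeReward_comp_perm_le {m : ℕ} {w q : Fin m → ℝ} (hw : Antitone w)
    (hq : Antitone q) (hq1 : ∀ i, q i ≤ 1) (τ : Perm (Fin m)) :
    cascadeReward w (q ∘ τ) ≤ cascadeReward w q := by
  obtain ⟨τ₀, -, hτ₀⟩ :=
    exists_max_image univ (fun τ : Perm (Fin m) => cascadeReward w (q ∘ τ)) univ_nonempty
  obtain ⟨τ₁, hτ₁mem, hτ₁min⟩ :=
    (univ.filter fun τ : Perm (Fin m) => cascadeReward w (q ∘ τ₀) ≤ cascadeReward w (q ∘ τ))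
      |>.exists_min_image (fun τ => positionSum (q ∘ τ)) ⟨τ₀, by simp⟩
  have hτ₁max := (mem_filter.1 hτ₁mem).2
  have hanti : Antitone (q ∘ τ₁) := by
    rcases m with _ | n
    · exact fun i => i.elim0
    refine Fin.antitone_iff_succ_le.2 fun i => not_lt.1 fun hlt => ?_
    have hswap := hτ₁min (τ₁ * swap i.castSucc i.succ) (mem_filter.2 ⟨mem_univ _,
      hτ₁max.trans (cascadeReward_le_comp_swap hw (fun j => hq1 _) hlt.le)⟩)
    rw [Perm.coe_mul, ← Function.comp_assoc, positionSum_comp_swap] at hswap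
    linarith
  calc cascadeReward w (q ∘ τ) ≤ cascadeReward w (q ∘ τ₀) := hτ₀ τ (mem_univ τ)
    _ ≤ cascadeReward w (q ∘ τ₁) := hτ₁max
    _ = cascadeReward w q := by rw [Tuple.unique_antitone (τ := 1) hanti hq]; rfl

/-- Sorting items in decreasing order of satisfaction probability maximizes the
expected reciprocal rank reward under the cascade model. -/
theorem err_sorted_is_optimal (m : ℕ) (p : Fin m → ℝ)
    (hp : ∀ i, p i ∈ Set.Icc (0 : ℝ) 1)
    (F : ℕ → ℝ) (hF : StrictMono F) (hF1 : ∀ n, 1 ≤ F n)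
    (π : Equiv.Perm (Fin m))
    (hsort : ∀ i j : Fin m, i ≤ j → p (π.symm j) ≤ p (π.symm i)) :
    ∀ σ : Equiv.Perm (Fin m), errReward m p F σ ≤ errReward m p F π := by
  intro σ
  have hw : Antitone fun i : Fin m => 1 / F ((i : ℕ) + 1) := fun i j hij =>
    one_div_le_one_div_of_le (one_pos.trans_le (hF1 _)) (hF.monotone (Nat.succ_le_succ hij))
  have hσ : p ∘ σ.symm = (p ∘ π.symm) ∘ (π * σ⁻¹) := by ext; simp
  rw [errReward_eq_cascadeReward, errReward_eq_cascadeReward, hσ]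
  exact cascadeReward_comp_perm_le hw hsort (fun i => (hp _).2) (π * σ⁻¹)
end

section
/- Consider the NDCG-family conditional risk: given a probability measure λ on a finite structure space S ⊆ ℝ^m and weights w_j = ∫ G(s_j)/Z(s) dλ(s) for j = 1,…,m, where F : ℕ → (0,∞) is strictly increasing and G > 0, the conditional risk ℓ(α, λ) = 1 - Σ_{j=1}^m w_j / F(π_α(j)) (where π_α(j) is the rank of item j when items are sorted in decreasing order of α) is minimized exactly by those α ∈ ℝ^m whose induced permutation sorts indices in decreasing order of w_j; in particular any α satisfying α_j > α_l whenever w_j > w_l is a minimizer. -/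
open Finset

/-!
Write `v k = 1 / F (k + 1)`, a strictly decreasing function of the rank `k`, so that the risk of
a ranking `π` is `1 - ∑ j, w j * v (π j)`. By the rearrangement inequality the sum is maximal for
a ranking that gives smaller ranks to larger weights. Conversely, if `w l < w j` but `π l < π j`,
swapping the ranks of `j` and `l` raises the sum by `(w j - w l) * (v (π l) - v (π j)) > 0`, so
`π` was not a minimizer.
-/

theorem sum_mul_comp_mul_swap_sub {ι R : Type*} [Fintype ι] [DecidableEq ι] [CommRing R]
    {w v : ι → R} {π : Equiv.Perm ι} {j l : ι} (hjl : j ≠ l) :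
    ∑ i, w i * v ((π * Equiv.swap j l) i) - ∑ i, w i * v (π i) =
      (w j - w l) * (v (π l) - v (π j)) := by
  rw [← sum_sub_distrib, ← sum_subset (subset_univ {j, l}), sum_pair hjl]
  · simp only [Equiv.Perm.mul_apply, Equiv.swap_apply_left, Equiv.swap_apply_right]
    ring
  · intro i _ hi
    obtain ⟨hij, hil⟩ : i ≠ j ∧ i ≠ l := by simpa [not_or] using hi
    simp [Equiv.swap_apply_of_ne_of_ne hij hil]

section Rearrangement

variable {ι R : Type*} [Fintype ι] [LinearOrder ι] [CommRing R] [LinearOrder R]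
  [IsStrictOrderedRing R] {w v : ι → R} {π : Equiv.Perm ι}

theorem Antitone.sum_mul_comp_perm_le_of_lt_imp_lt (hv : Antitone v)
    (hπ : ∀ j l, w l < w j → π j < π l) (σ : Equiv.Perm ι) :
    ∑ i, w i * v (σ i) ≤ ∑ i, w i * v (π i) := by
  have hmonovary : Monovary w (v ∘ π) := fun i j hvij =>
    not_lt.mp fun hwji => (hπ i j hwji).not_ge (hv.reflect_lt hvij).le
  calc ∑ i, w i * v (σ i) = ∑ i, w i * (v ∘ π) ((π⁻¹ * σ) i) := by simp
    _ ≤ ∑ i, w i * (v ∘ π) i := hmonovary.sum_mul_comp_perm_le_sum_mul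
    _ = ∑ i, w i * v (π i) := rfl

theorem StrictAnti.sum_mul_comp_perm_lt_sum_mul_comp_mul_swap [DecidableEq ι] (hv : StrictAnti v)
    {j l : ι} (hw : w l < w j) (hπ : π l < π j) :
    ∑ i, w i * v (π i) < ∑ i, w i * v ((π * Equiv.swap j l) i) := by
  have hjl : j ≠ l := fun h => hw.ne (congrArg w h.symm)
  have hgain := sum_mul_comp_mul_swap_sub (w := w) (v := v) (π := π) hjl
  have : 0 < (w j - w l) * (v (π l) - v (π j)) := mul_pos (sub_pos.mpr hw) (sub_pos.mpr (hv hπ))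
  linarith

end Rearrangement

theorem ndcg_risk_minimized_by_decreasing_w_general (m : ℕ)
    (F : ℕ → ℝ) (hF : StrictMono F) (hFpos : ∀ n, 0 < F n)
    (w : Fin m → ℝ)
    (risk : Equiv.Perm (Fin m) → ℝ)
    (hrisk : ∀ π, risk π = 1 - ∑ j, w j / F ((π j : ℕ) + 1)) :
    (∀ (α : Fin m → ℝ) (π : Equiv.Perm (Fin m)),
        (∀ j l, α j > α l → π j < π l) →   -- π is induced by sorting α decreasingly
        (∀ j l, w j > w l → α j > α l) →   -- α orders items by decreasing w
        ∀ (α' : Fin m → ℝ) (π' : Equiv.Perm (Fin m)),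
          (∀ j l, α' j > α' l → π' j < π' l) → risk π ≤ risk π') ∧
    (∀ (α : Fin m → ℝ) (π : Equiv.Perm (Fin m)),
        (∀ j l, α j > α l → π j < π l) →
        (∀ π' : Equiv.Perm (Fin m), risk π ≤ risk π') →  -- π achieves minimal risk
        ∀ j l, w j > w l → π j < π l) := by
  classical
  set v : Fin m → ℝ := fun k => (F ((k : ℕ) + 1))⁻¹
  have hv : StrictAnti v := fun a b hab =>
    inv_strictAnti₀ (hFpos _) (hF (Nat.succ_lt_succ (Fin.lt_def.mp hab)))
  have hrisk_v : ∀ π, risk π = 1 - ∑ j, w j * v (π j) := fun π => by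
    simp only [hrisk, v, div_eq_mul_inv]
  refine ⟨fun α π hπ hα _ π' _ => ?_, fun _ π _ hmin j l hw => ?_⟩
  · rw [hrisk_v, hrisk_v]
    have := hv.antitone.sum_mul_comp_perm_le_of_lt_imp_lt (fun j l h => hπ j l (hα j l h)) π'
    linarith
  · by_contra hπ
    have hπ : π l < π j :=
      (not_lt.mp hπ).lt_of_ne fun h => hw.ne' (congrArg w (π.injective h.symm))
    have := hmin (π * Equiv.swap j l)
    rw [hrisk_v, hrisk_v] at this
    linarith [hv.sum_mul_comp_perm_lt_sum_mul_comp_mul_swap hw hπ]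

/-- NDCG-family conditional risk: with weights `w j = ∫ G(s_j)/Z(s) dλ(s)` over a finite
structure space, `F` strictly increasing and positive, and `π_α` any permutation compatible
with sorting scores `α` in decreasing order, the conditional risk
`ℓ(α, λ) = 1 - ∑ j, w j / F (π_α j)` is minimized exactly by those `α` whose induced
permutation sorts the indices in decreasing order of `w`; in particular any `α` with
`α j > α l` whenever `w j > w l` is a minimizer. (Ranks are 0-indexed; `F` is evaluated
at rank + 1.) -/
theorem ndcg_risk_minimized_by_decreasing_w (m : ℕ) (S : Type*) [Fintype S]
    (lam : S → ℝ) (hlam0 : ∀ s, 0 ≤ lam s) (hlam1 : ∑ s, lam s = 1)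
    (sc : S → Fin m → ℝ) (G : ℝ → ℝ) (hG : ∀ x, 0 < G x)
    (Z : S → ℝ) (hZ : ∀ s, 0 < Z s)
    (F : ℕ → ℝ) (hF : StrictMono F) (hFpos : ∀ n, 0 < F n)
    (w : Fin m → ℝ) (hw : ∀ j, w j = ∑ s, lam s * (G (sc s j) / Z s))
    (risk : Equiv.Perm (Fin m) → ℝ)
    (hrisk : ∀ π, risk π = 1 - ∑ j, w j / F ((π j : ℕ) + 1)) :
    (∀ (α : Fin m → ℝ) (π : Equiv.Perm (Fin m)),
        (∀ j l, α j > α l → π j < π l) →   -- π is induced by sorting α decreasingly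
        (∀ j l, w j > w l → α j > α l) →   -- α orders items by decreasing w
        ∀ (α' : Fin m → ℝ) (π' : Equiv.Perm (Fin m)),
          (∀ j l, α' j > α' l → π' j < π' l) → risk π ≤ risk π') ∧
    (∀ (α : Fin m → ℝ) (π : Equiv.Perm (Fin m)),
        (∀ j l, α j > α l → π j < π l) →
        (∀ π' : Equiv.Perm (Fin m), risk π ≤ risk π') →  -- π achieves minimal risk
        ∀ j l, w j > w l → π j < π l) :=
  ndcg_risk_minimized_by_decreasing_w_general m F hF hFpos w risk hrisk
end

section
/- Suppose the surrogate loss φ : ℝ^m × S → ℝ≥0 is bounded below, S is finite, and the loss L takes finitely many values. If φ is structure-consistent — i.e., for every probability measure λ on S, inf_α ∫φ(α,s)dλ(s) < inf { ∫φ(α,s)dλ(s) : α ∉ argmin_{α'} ∫L(α',s)dλ(s) } — then for every ε > 0 there exists δ > 0 such that for every probability measure λ on S and every α ∈ ℝ^m, ∫φ(α,s)dλ(s) - inf_{α'}∫φ(α',s)dλ(s) < δ implies ∫L(α,s)dλ(s) - inf_{α'}∫L(α',s)dλ(s) < ε. -/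
/-!
Fix `ν` in the simplex and let `c` be the structure-consistency threshold at `ν`. If `μ` is close
to `ν`, then `t • ν ≤ μ` for some `t < 1` close to `1`, so for the nonnegative surrogate the
conditional risk at `ν` is at most `1 / t` times the one at `μ`; and the optimal surrogate risk at
`μ` is at most the surrogate risk at `μ` of a fixed near-optimal score for `ν`, which is close to
the optimum at `ν`. Hence every score that is `δ`-optimal for the surrogate at `μ` has surrogate
risk below `c` at `ν`, i.e. it minimizes the target risk at `ν`, and since the bounded target
risk is Lipschitz in `μ`, it is `ε`-optimal for the target at `μ`. Compactness of the simplex makes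
`δ` uniform.
-/

open Finset Filter Topology

theorem IsCompact.exists_pos_forall_of_forall_exists_pos_eventually {X : Type*}
    [TopologicalSpace X] {K : Set X} (hK : IsCompact K) {P : ℝ → X → Prop}
    (hP : ∀ ⦃δ δ'⦄ x, δ' ≤ δ → P δ x → P δ' x) (h : ∀ x ∈ K, ∃ δ > 0, ∀ᶠ y in 𝓝[K] x, P δ y) :
    ∃ δ > 0, ∀ y ∈ K, P δ y := by
  refine hK.induction_on (p := fun t => ∃ δ > 0, ∀ y ∈ t, P δ y) ⟨1, one_pos, by simp⟩
    ?_ ?_ ?_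
  · rintro s t hst ⟨δ, hδ, ht⟩
    exact ⟨δ, hδ, fun y hy => ht y (hst hy)⟩
  · rintro s t ⟨δ, hδ, hs⟩ ⟨δ', hδ', ht⟩
    refine ⟨min δ δ', lt_min hδ hδ', ?_⟩
    rintro y (hy | hy)
    · exact hP y (min_le_left _ _) (hs y hy)
    · exact hP y (min_le_right _ _) (ht y hy)
  · intro x hx
    obtain ⟨δ, hδ, hx⟩ := h x hx
    exact ⟨_, hx, δ, hδ, fun _ hy => hy⟩

section ConditionalRisk

variable {A S : Type*} [Fintype S]

theorem sum_mul_le_sum_mul_add_mul_sum_abs_sub {μ ν w : S → ℝ} {M : ℝ}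
    (hw : ∀ s, |w s| ≤ M) :
    ∑ s, ν s * w s ≤ ∑ s, μ s * w s + M * ∑ s, |ν s - μ s| := by
  rw [mul_sum, ← sum_add_distrib]
  gcongr with s
  have : (ν s - μ s) * w s ≤ |ν s - μ s| * M :=
    calc (ν s - μ s) * w s ≤ |(ν s - μ s) * w s| := le_abs_self _
      _ = |ν s - μ s| * |w s| := abs_mul _ _
      _ ≤ |ν s - μ s| * M := by gcongr; exact hw s
  linarith

theorem eventually_forall_mul_le {ν : S → ℝ} (hν : 0 ≤ ν) {t : ℝ} (ht : t < 1) :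
    ∀ᶠ μ in 𝓝[Set.Ici 0] ν, ∀ s, t * ν s ≤ μ s := by
  rw [eventually_all]
  intro s
  rcases (hν s).eq_or_lt with h | h
  · filter_upwards [self_mem_nhdsWithin] with μ hμ
    rw [← h, Pi.zero_apply, mul_zero]
    exact hμ s
  · have hlt : t * ν s < ν s := mul_lt_of_lt_one_left h ht
    exact eventually_nhdsWithin_of_eventually_nhds <|
      (((continuous_apply s).tendsto ν).eventually_const_lt hlt).mono fun _ => le_of_lt

/-- `μ : S → ℝ` encodes a measure on `S`; this is `ℓ(α, μ) = ∫ f(α, s) dμ(s)`. -/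
def condRisk (f : A → S → ℝ) (μ : S → ℝ) (α : A) : ℝ :=
  ∑ s, μ s * f α s

noncomputable def excessCondRisk (f : A → S → ℝ) (μ : S → ℝ) (α : A) : ℝ :=
  condRisk f μ α - ⨅ α', condRisk f μ α'

def IsStructureConsistentAt (L φ : A → S → ℝ) (ν : S → ℝ) : Prop :=
  ∃ c, (⨅ α, condRisk φ ν α) < c ∧
    ∀ α, ¬ (∀ β, condRisk L ν α ≤ condRisk L ν β) → c ≤ condRisk φ ν α

theorem continuous_condRisk (f : A → S → ℝ) (α : A) : Continuous fun μ => condRisk f μ α := by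
  unfold condRisk
  fun_prop

variable {f : A → S → ℝ} {μ ν : S → ℝ}

theorem condRisk_nonneg (hf : ∀ α s, 0 ≤ f α s) (hμ : 0 ≤ μ) (α : A) : 0 ≤ condRisk f μ α :=
  sum_nonneg fun s _ => mul_nonneg (hμ s) (hf α s)

theorem bddBelow_range_condRisk (hf : ∀ α s, 0 ≤ f α s) (hμ : 0 ≤ μ) :
    BddBelow (Set.range (condRisk f μ)) :=
  ⟨0, by rintro _ ⟨α, rfl⟩; exact condRisk_nonneg hf hμ α⟩

theorem mul_condRisk_le_of_forall_mul_le (hf : ∀ α s, 0 ≤ f α s) {t : ℝ}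
    (ht : ∀ s, t * ν s ≤ μ s) (α : A) : t * condRisk f ν α ≤ condRisk f μ α := by
  unfold condRisk
  rw [mul_sum]
  refine sum_le_sum fun s _ => ?_
  rw [← mul_assoc]
  exact mul_le_mul_of_nonneg_right (ht s) (hf α s)

theorem excessCondRisk_le_of_forall_le {M : ℝ} (hf : ∀ β s, |f β s| ≤ M) {α : A}
    (hmin : ∀ β, condRisk f ν α ≤ condRisk f ν β) (μ : S → ℝ) :
    excessCondRisk f μ α ≤ 2 * M * ∑ s, |μ s - ν s| := by
  have : Nonempty A := ⟨α⟩
  have hsymm : ∑ s, |ν s - μ s| = ∑ s, |μ s - ν s| := sum_congr rfl fun s _ => abs_sub_comm _ _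
  have hle (β : A) : condRisk f μ α - 2 * M * ∑ s, |μ s - ν s| ≤ condRisk f μ β := by
    have hμν := sum_mul_le_sum_mul_add_mul_sum_abs_sub (μ := ν) (ν := μ) (hf α)
    have hνμ := sum_mul_le_sum_mul_add_mul_sum_abs_sub (μ := μ) (ν := ν) (hf β)
    rw [hsymm] at hνμ
    have := hmin β
    unfold condRisk at *
    linarith
  unfold excessCondRisk
  linarith [le_ciInf hle]

theorem exists_pos_eventually_condRisk_lt_of_excessCondRisk_lt [Nonempty A] (hf : ∀ α s, 0 ≤ f α s)
    (hν : 0 ≤ ν) {c : ℝ} (hc : ⨅ α, condRisk f ν α < c) :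
    ∃ δ > 0, ∀ᶠ μ in 𝓝[Set.Ici 0] ν, ∀ α, excessCondRisk f μ α < δ → condRisk f ν α < c := by
  obtain ⟨γ, hγ⟩ := exists_lt_of_ciInf_lt hc
  obtain ⟨b, hγb, hbc⟩ := exists_between hγ
  obtain ⟨b', hγb', hb'b⟩ := exists_between hγb
  have hc0 : 0 < c := (condRisk_nonneg hf hν γ).trans_lt hγ
  have hb0 : 0 ≤ b := (condRisk_nonneg hf hν γ).trans hγb.le
  have hγ_near : ∀ᶠ μ in 𝓝[Set.Ici 0] ν, condRisk f μ γ < b' :=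
    eventually_nhdsWithin_of_eventually_nhds <|
      ((continuous_condRisk f γ).tendsto ν).eventually_lt_const hγb'
  refine ⟨b - b', sub_pos.2 hb'b, ?_⟩
  filter_upwards [self_mem_nhdsWithin, hγ_near,
    eventually_forall_mul_le hν ((div_lt_one hc0).2 hbc)] with μ hμ hμγ hscale α hα
  have hinf : ⨅ α', condRisk f μ α' ≤ condRisk f μ γ := ciInf_le (bddBelow_range_condRisk hf hμ) γ
  have hscaled := mul_condRisk_le_of_forall_mul_le hf hscale α
  unfold excessCondRisk at hα
  refine lt_of_mul_lt_mul_left (a := b / c) ?_ (by positivity)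
  rw [div_mul_cancel₀ b hc0.ne']
  linarith

theorem exists_pos_eventually_excessCondRisk_lt [Nonempty A] {L φ : A → S → ℝ} {M : ℝ}
    (hL : ∀ α s, |L α s| ≤ M) (hφ : ∀ α s, 0 ≤ φ α s) (hν : 0 ≤ ν)
    (hSC : IsStructureConsistentAt L φ ν) {ε : ℝ} (hε : 0 < ε) :
    ∃ δ > 0, ∀ᶠ μ in 𝓝[Set.Ici 0] ν,
      ∀ α, excessCondRisk φ μ α < δ → excessCondRisk L μ α < ε := by
  obtain ⟨c, hc, hnonmin⟩ := hSC
  obtain ⟨δ, hδ, hφν⟩ := exists_pos_eventually_condRisk_lt_of_excessCondRisk_lt hφ hν hc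
  have hclose : ∀ᶠ μ in 𝓝[Set.Ici 0] ν, 2 * M * ∑ s, |μ s - ν s| < ε := by
    have hcont : Continuous fun μ : S → ℝ => 2 * M * ∑ s, |μ s - ν s| := by fun_prop
    exact eventually_nhdsWithin_of_eventually_nhds <|
      (hcont.tendsto' ν 0 (by simp)).eventually_lt_const hε
  refine ⟨δ, hδ, ?_⟩
  filter_upwards [hφν, hclose] with μ hμφ hμclose α hα
  have hmin : ∀ β, condRisk L ν α ≤ condRisk L ν β := by
    by_contra h
    exact (hnonmin α h).not_gt (hμφ α hα)
  exact (excessCondRisk_le_of_forall_le hL hmin μ).trans_lt hμclose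

end ConditionalRisk

theorem structure_consistent_implies_uniform_consistency_general
    (m : ℕ) (S : Type*) [Fintype S]
    (L : (Fin m → ℝ) → S → ℝ) (hL : ∀ α s, L α s ∈ Set.Icc (0 : ℝ) 1)
    (φ : (Fin m → ℝ) → S → ℝ) (hφ : ∀ α s, 0 ≤ φ α s)
    (hSC : ∀ lam : S → ℝ, (∀ s, 0 ≤ lam s) → (∑ s, lam s) = 1 →
      ∃ cval : ℝ,
        (⨅ α : Fin m → ℝ, ∑ s, lam s * φ α s) < cval ∧
        ∀ α : Fin m → ℝ,
          ¬ (∀ β : Fin m → ℝ, ∑ s, lam s * L α s ≤ ∑ s, lam s * L β s) →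
          cval ≤ ∑ s, lam s * φ α s) :
    ∀ ε > 0, ∃ δ > 0, ∀ lam : S → ℝ, (∀ s, 0 ≤ lam s) → (∑ s, lam s) = 1 →
      ∀ α : Fin m → ℝ,
        (∑ s, lam s * φ α s) - (⨅ α' : Fin m → ℝ, ∑ s, lam s * φ α' s) < δ →
        (∑ s, lam s * L α s) - (⨅ α' : Fin m → ℝ, ∑ s, lam s * L α' s) < ε := by
  intro ε hε
  have hL_abs : ∀ α s, |L α s| ≤ 1 := fun α s =>
    abs_le.2 ⟨by linarith [(hL α s).1], (hL α s).2⟩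
  have hlocal : ∀ ν ∈ stdSimplex ℝ S, ∃ δ > 0, ∀ᶠ μ in 𝓝[stdSimplex ℝ S] ν,
      ∀ α, excessCondRisk φ μ α < δ → excessCondRisk L μ α < ε := by
    intro ν hν
    obtain ⟨δ, hδ, h⟩ :=
      exists_pos_eventually_excessCondRisk_lt hL_abs hφ hν.1 (hSC ν hν.1 hν.2) hε
    exact ⟨δ, hδ, nhdsWithin_mono ν (fun μ hμ => hμ.1) h⟩
  obtain ⟨δ, hδ, h⟩ := (isCompact_stdSimplex ℝ S).exists_pos_forall_of_forall_exists_pos_eventually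
    (fun _ _ _ hle h α hα => h α (hα.trans_le hle)) hlocal
  exact ⟨δ, hδ, fun lam h0 h1 => h lam ⟨h0, h1⟩⟩

/-- Structure-consistency implies uniform Fisher consistency (finite structure space,
finitely-valued loss): if for every probability measure `lam` on the finite set `S`
the infimum of the conditional surrogate risk is strictly smaller than its infimum over
scores not minimizing the conditional risk, then for every `ε > 0` there is `δ > 0`
such that, for every `lam` and every `α`, surrogate-risk suboptimality `< δ` implies
risk suboptimality `< ε`. -/
theorem structure_consistent_implies_uniform_consistency
    (m : ℕ) (S : Type*) [Fintype S]
    (L : (Fin m → ℝ) → S → ℝ) (hL : ∀ α s, L α s ∈ Set.Icc (0 : ℝ) 1)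
    (hLfin : (Set.range (Function.uncurry L)).Finite)
    (φ : (Fin m → ℝ) → S → ℝ) (hφ : ∀ α s, 0 ≤ φ α s)
    (hSC : ∀ lam : S → ℝ, (∀ s, 0 ≤ lam s) → (∑ s, lam s) = 1 →
      ∃ cval : ℝ,
        (⨅ α : Fin m → ℝ, ∑ s, lam s * φ α s) < cval ∧
        ∀ α : Fin m → ℝ,
          ¬ (∀ β : Fin m → ℝ, ∑ s, lam s * L α s ≤ ∑ s, lam s * L β s) →
          cval ≤ ∑ s, lam s * φ α s) :
    ∀ ε > 0, ∃ δ > 0, ∀ lam : S → ℝ, (∀ s, 0 ≤ lam s) → (∑ s, lam s) = 1 →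
      ∀ α : Fin m → ℝ,
        (∑ s, lam s * φ α s) - (⨅ α' : Fin m → ℝ, ∑ s, lam s * φ α' s) < δ →
        (∑ s, lam s * L α s) - (⨅ α' : Fin m → ℝ, ∑ s, lam s * L α' s) < ε :=
  structure_consistent_implies_uniform_consistency_general m S L hL φ hφ hSC
end

section
/- Conversely to structure consistency: with S finite and L taking finitely many values, if there exists a probability measure λ on S such that inf_α ℓ_φ(α,λ) = inf { ℓ_φ(α,λ) : α ∉ argmin_{α'} ℓ(α',λ) } (i.e., φ is not structure-consistent at λ), then there exists a sequence α_n with ℓ_φ(α_n,λ) → inf_α ℓ_φ(α,λ) but lim inf_n ℓ(α_n,λ) > inf_α ℓ(α,λ). Hence Fisher consistency fails: surrogate-risk convergence does not imply risk convergence. -/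
/-!
Since `L` takes finitely many values and `S` is finite, the risk `α ↦ ∑ s, λ s * L α s` takes
finitely many values, so there is a gap `c > inf ℓ` below which no non-minimal risk value lies.
The near-optimal non-minimizers `A n` supplied by the failure of structure consistency then
have surrogate risk squeezed between `inf ℓ_φ` and `inf ℓ_φ + 1/(n+1)`, while their risk never
drops below `c`.
-/

open Finset Filter

theorem Set.Finite.range_weighted_sum {ι S : Type*} [Fintype S] {L : ι → S → ℝ}
    (hL : (Set.range (Function.uncurry L)).Finite) (w : S → ℝ) :
    (Set.range fun a => ∑ s, w s * L a s).Finite := by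
  have hvals : {h : S → ℝ | ∀ s, h s ∈ Set.range (Function.uncurry L)}.Finite :=
    Set.Finite.pi' fun _ => hL
  refine (hvals.image fun h => ∑ s, w s * h s).subset ?_
  rintro _ ⟨a, rfl⟩
  exact ⟨L a, fun s => ⟨(a, s), rfl⟩, rfl⟩

section FiniteRange

variable {ι : Type*} {g : ι → ℝ}

theorem exists_gap_above_iInf_of_finite_range (hg : (Set.range g).Finite) :
    ∃ c, (⨅ a, g a) < c ∧ ∀ a, (⨅ a, g a) < g a → c ≤ g a := by
  -- the extra point `⨅ + 1` keeps `T` nonempty when `g` has no non-minimal value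
  set T : Set ℝ := Set.range g ∩ Set.Ioi (⨅ a, g a) ∪ {(⨅ a, g a) + 1}
  have hT : T.Finite := (hg.inter_of_left _).union (Set.finite_singleton _)
  have hTne : T.Nonempty := ⟨_, Or.inr rfl⟩
  have hmem : sInf T ∈ T := hTne.csInf_mem hT
  refine ⟨sInf T, ?_, fun a ha => csInf_le hT.bddBelow (Or.inl ⟨⟨a, rfl⟩, ha⟩)⟩
  rcases hmem with ⟨-, hlt⟩ | hone
  · exact hlt
  · rw [hone]
    linarith

theorem iInf_lt_apply_of_not_forall_le (hg : BddBelow (Set.range g)) {a : ι}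
    (ha : ¬ ∀ b, g a ≤ g b) : (⨅ a, g a) < g a := by
  obtain ⟨b, hb⟩ : ∃ b, g b < g a := by simpa only [not_forall, not_le] using ha
  exact (ciInf_le hg b).trans_lt hb

theorem iInf_lt_liminf_of_finite_range (hg : (Set.range g).Finite) {x : ℕ → ι}
    (hx : ∀ n, (⨅ a, g a) < g (x n)) : (⨅ a, g a) < liminf (fun n => g (x n)) atTop := by
  obtain ⟨c, hc, hgap⟩ := exists_gap_above_iInf_of_finite_range hg
  have hbdd : IsBoundedUnder (· ≤ ·) atTop fun n => g (x n) :=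
    BddAbove.isBoundedUnder univ_mem <|
      hg.bddAbove.mono (by rintro _ ⟨n, -, rfl⟩; exact ⟨x n, rfl⟩)
  exact hc.trans_le <|
    le_liminf_of_le hbdd.isCoboundedUnder_ge (Eventually.of_forall fun n => hgap _ (hx n))

end FiniteRange

theorem tendsto_iInf_of_lt_iInf_add_one_div {ι : Type*} {f : ι → ℝ}
    (hf : BddBelow (Set.range f)) {x : ℕ → ι} (hx : ∀ n : ℕ, f (x n) < (⨅ a, f a) + 1 / (n + 1)) :
    Tendsto (fun n => f (x n)) atTop (nhds (⨅ a, f a)) := by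
  have hupper : Tendsto (fun n : ℕ => (⨅ a, f a) + 1 / ((n : ℝ) + 1)) atTop
      (nhds (⨅ a, f a)) := by
    simpa using tendsto_const_nhds.add (tendsto_one_div_add_atTop_nhds_zero_nat (𝕜 := ℝ))
  exact tendsto_of_tendsto_of_tendsto_of_le_of_le tendsto_const_nhds hupper
    (fun n => ciInf_le hf (x n)) (fun n => (hx n).le)

theorem not_structure_consistent_implies_not_fisher_consistent_general
    (m : ℕ) (S : Type*) [Fintype S]
    (L φ : (Fin m → ℝ) → S → ℝ)
    (hLfin : (Set.range (Function.uncurry L)).Finite)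
    (hφ : ∀ α s, 0 ≤ φ α s)
    (lam : S → ℝ) (hlam0 : ∀ s, 0 ≤ lam s)
    (hNSC : ∀ n : ℕ, ∃ α : Fin m → ℝ,
      ¬ (∀ β : Fin m → ℝ, ∑ s, lam s * L α s ≤ ∑ s, lam s * L β s) ∧
      ∑ s, lam s * φ α s < (⨅ α' : Fin m → ℝ, ∑ s, lam s * φ α' s) + 1 / (n + 1)) :
    ∃ A : ℕ → Fin m → ℝ,
      Tendsto (fun n => ∑ s, lam s * φ (A n) s) atTop
        (nhds (⨅ α' : Fin m → ℝ, ∑ s, lam s * φ α' s)) ∧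
      (⨅ α' : Fin m → ℝ, ∑ s, lam s * L α' s) <
        liminf (fun n => ∑ s, lam s * L (A n) s) atTop := by
  choose A hA_not_min hA_near using hNSC
  have hrisk_fin := Set.Finite.range_weighted_sum hLfin lam
  have hsurrogate_bdd : BddBelow (Set.range fun α => ∑ s, lam s * φ α s) :=
    ⟨0, by
      rintro _ ⟨α, rfl⟩
      exact sum_nonneg fun s _ => mul_nonneg (hlam0 s) (hφ α s)⟩
  exact ⟨A, tendsto_iInf_of_lt_iInf_add_one_div hsurrogate_bdd hA_near,
    iInf_lt_liminf_of_finite_range hrisk_fin fun n =>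
      iInf_lt_apply_of_not_forall_le hrisk_fin.bddBelow (hA_not_min n)⟩

/-- If `φ` is not structure-consistent at the probability measure `lam` on the finite
structure space `S` — i.e. the infimum of the conditional surrogate risk equals its
infimum over scores that do not minimize the conditional risk (expressed here by the
existence, for each `n`, of a non-minimizer of the risk whose surrogate risk is within
`1/(n+1)` of the overall infimum) — then there is a sequence `A n` whose surrogate risk
converges to the optimal surrogate risk while its risk stays bounded away from the
optimal risk: Fisher consistency fails. -/
theorem not_structure_consistent_implies_not_fisher_consistent
    (m : ℕ) (S : Type*) [Fintype S]
    (L φ : (Fin m → ℝ) → S → ℝ)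
    (hL : ∀ α s, L α s ∈ Set.Icc (0 : ℝ) 1)
    (hLfin : (Set.range (Function.uncurry L)).Finite)
    (hφ : ∀ α s, 0 ≤ φ α s)
    (lam : S → ℝ) (hlam0 : ∀ s, 0 ≤ lam s) (hlam1 : ∑ s, lam s = 1)
    (hmin : ∃ α : Fin m → ℝ, ∀ β : Fin m → ℝ,
      ∑ s, lam s * L α s ≤ ∑ s, lam s * L β s)
    (hNSC : ∀ n : ℕ, ∃ α : Fin m → ℝ,
      ¬ (∀ β : Fin m → ℝ, ∑ s, lam s * L α s ≤ ∑ s, lam s * L β s) ∧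
      ∑ s, lam s * φ α s < (⨅ α' : Fin m → ℝ, ∑ s, lam s * φ α' s) + 1 / (n + 1)) :
    ∃ A : ℕ → Fin m → ℝ,
      Tendsto (fun n => ∑ s, lam s * φ (A n) s) atTop
        (nhds (⨅ α' : Fin m → ℝ, ∑ s, lam s * φ α' s)) ∧
      (⨅ α' : Fin m → ℝ, ∑ s, lam s * L α' s) <
        liminf (fun n => ∑ s, lam s * L (A n) s) atTop :=
  not_structure_consistent_implies_not_fisher_consistent_general m S L φ hLfin hφ lam hlam0 hNSC
end

section
/- Consistency of the difference-weighted pairwise surrogate in the acyclic case: let s ∈ ℝ^{m×m} be a nonnegative matrix whose difference graph (edge i→j present with weight s_{ij} - s_{ji} when s_{ij} > s_{ji}) is acyclic, and let φ : ℝ → ℝ≥0 be convex, nonincreasing, differentiable with φ'(0) < 0. Define Φ(α) = Σ_{i,j} max{s_{ij} - s_{ji}, 0} φ(α_i - α_j). Then every minimizer α* of Φ satisfies α*_i > α*_j whenever s_{ij} > s_{ji}; consequently every minimizer of Φ minimizes the pairwise loss L(α) = Σ_{i<j} s_{ij} 1{α_i ≤ α_j} + Σ_{i>j} s_{ij} 1{α_i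 < α_j}. -/
/-!
Since `φ'(0) < 0` and `φ` is antitone, some `x > 0` has `φ x < φ 0`. If a minimizer `α`
misordered an edge `i₀ → j₀` of the acyclic difference graph, shift it along a rank `σ`
decreasing along the edges: `α + T σ` with `T = x - (α i₀ - α j₀)` widens every edge gap by
at least `T`, hence lowers every weighted term and strictly lowers the term of `i₀ → j₀`.
Once every edge is ordered, each pair `i < j` pays `min (s i j) (s j i)` in the pairwise loss,
which is the least any ranking can pay.
-/
open Finset

/-- The pairwise 0–1 loss
`L(α) = ∑_{i<j} s_{ij} 1{α_i ≤ α_j} + ∑_{i>j} s_{ij} 1{α_i < α_j}`. -/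
noncomputable def pairwiseLoss (m : ℕ) (s : Matrix (Fin m) (Fin m) ℝ)
    (α : Fin m → ℝ) : ℝ :=
  ∑ i, ∑ j,
    if i < j then (if α i ≤ α j then s i j else 0)
    else if j < i then (if α i < α j then s i j else 0) else 0

/-- The difference-weighted pairwise surrogate
`Φ(α) = ∑_{i,j} max{s_{ij} - s_{ji}, 0} φ(α_i - α_j)`. -/
noncomputable def diffWeightedSurrogate (m : ℕ) (s : Matrix (Fin m) (Fin m) ℝ)
    (φ : ℝ → ℝ) (α : Fin m → ℝ) : ℝ :=
  ∑ i, ∑ j, max (s i j - s j i) 0 * φ (α i - α j)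

theorem Relation.exists_rank_lt_of_irreflexive_transGen {ι : Type*} [Fintype ι]
    {r : ι → ι → Prop} (hacyc : Irreflexive (Relation.TransGen r)) :
    ∃ σ : ι → ℕ, ∀ i j, r i j → σ j < σ i := by
  classical
  refine ⟨fun i => #{k | Relation.TransGen r i k}, fun i j hij => card_lt_card ?_⟩
  refine (ssubset_iff_of_subset fun k hk => ?_).2 ⟨j, ?_, fun hj => hacyc j ?_⟩
  · simp only [mem_filter, mem_univ, true_and] at hk ⊢
    exact .head hij hk
  · simpa using Relation.TransGen.single hij
  · simpa using hj

theorem exists_lt_of_deriv_neg {f : ℝ → ℝ} {a : ℝ} (h : deriv f a < 0) : ∃ x, f x < f a := by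
  by_contra! hmin
  exact h.ne (IsLocalMin.deriv_eq_zero (Filter.Eventually.of_forall hmin))

theorem sum_sum_ite_lt_ite_gt {ι M : Type*} [Fintype ι] [LinearOrder ι] [AddCommMonoid M]
    (a b : ι → ι → M) :
    ∑ i, ∑ j, (if i < j then a i j else if j < i then b i j else 0) =
      ∑ i, ∑ j, if i < j then a i j + b j i else 0 := by
  calc ∑ i, ∑ j, (if i < j then a i j else if j < i then b i j else 0)
      = ∑ i, ∑ j, ((if i < j then a i j else 0) + if j < i then b i j else 0) := by
        refine sum_congr rfl fun i _ => sum_congr rfl fun j _ => ?_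
        rcases lt_trichotomy i j with h | rfl | h
        · simp [h, h.not_gt]
        · simp
        · simp [h, h.not_gt]
    _ = (∑ i, ∑ j, if i < j then a i j else 0) + ∑ i, ∑ j, if j < i then b i j else 0 := by
        simp only [sum_add_distrib]
    _ = (∑ i, ∑ j, if i < j then a i j else 0) + ∑ i, ∑ j, if i < j then b j i else 0 := by
        rw [sum_comm (f := fun i j => if j < i then b i j else 0)]
    _ = ∑ i, ∑ j, if i < j then a i j + b j i else 0 := by
        simp only [← sum_add_distrib, ite_add_ite, add_zero]

section Surrogate

variable {m : ℕ} {s : Matrix (Fin m) (Fin m) ℝ} {φ : ℝ → ℝ}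

theorem diffWeightedSurrogate_lt_of_edge_terms {α β : Fin m → ℝ}
    (hle : ∀ i j, s j i < s i j → φ (β i - β j) ≤ φ (α i - α j))
    {i₀ j₀ : Fin m} (hedge : s j₀ i₀ < s i₀ j₀)
    (hlt : φ (β i₀ - β j₀) < φ (α i₀ - α j₀)) :
    diffWeightedSurrogate m s φ β < diffWeightedSurrogate m s φ α := by
  have hterm : ∀ i j, max (s i j - s j i) 0 * φ (β i - β j) ≤
      max (s i j - s j i) 0 * φ (α i - α j) := fun i j => by
    rcases lt_or_ge (s j i) (s i j) with h | h
    · exact mul_le_mul_of_nonneg_left (hle i j h) (le_max_right _ _)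
    · simp [max_eq_right (sub_nonpos.2 h)]
  have hweight : 0 < max (s i₀ j₀ - s j₀ i₀) 0 := lt_max_of_lt_left (sub_pos.2 hedge)
  refine sum_lt_sum (fun i _ => sum_le_sum fun j _ => hterm i j) ⟨i₀, mem_univ _, ?_⟩
  exact sum_lt_sum (fun j _ => hterm i₀ j)
    ⟨j₀, mem_univ _, mul_lt_mul_of_pos_left hlt hweight⟩

theorem diffWeightedSurrogate_minimizer_orders_edges
    (hacyc : Irreflexive (Relation.TransGen fun i j : Fin m => s j i < s i j))
    (hanti : Antitone φ) (hφ : ∃ x, φ x < φ 0) {α : Fin m → ℝ}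
    (hα : ∀ β, diffWeightedSurrogate m s φ α ≤ diffWeightedSurrogate m s φ β) :
    ∀ i j, s j i < s i j → α j < α i := by
  obtain ⟨σ, hσ⟩ := Relation.exists_rank_lt_of_irreflexive_transGen hacyc
  obtain ⟨x, hx⟩ := hφ
  have hx_pos : 0 < x := lt_of_not_ge fun h => hx.not_ge (hanti h)
  intro i₀ j₀ hedge
  by_contra! hmis
  set T := x - (α i₀ - α j₀)
  have hgap : ∀ i j, s j i < s i j → α i - α j + T ≤
      (α i + T * σ i) - (α j + T * σ j) := fun i j hij => by
    have : (σ j : ℝ) + 1 ≤ σ i := by exact_mod_cast hσ i j hij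
    nlinarith
  refine (hα fun i => α i + T * σ i).not_gt
    (diffWeightedSurrogate_lt_of_edge_terms (fun i j hij => hanti ?_) hedge ?_)
  · linarith [hgap i j hij]
  · calc φ _ ≤ φ x := hanti (by linarith [hgap i₀ j₀ hedge])
      _ < φ 0 := hx
      _ ≤ φ (α i₀ - α j₀) := hanti (by linarith)

end Surrogate

theorem pairwiseLoss_eq_sum_pairs (m : ℕ) (s : Matrix (Fin m) (Fin m) ℝ) (α : Fin m → ℝ) :
    pairwiseLoss m s α =
      ∑ i, ∑ j, if i < j then (if α i ≤ α j then s i j else s j i) else 0 := by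
  rw [pairwiseLoss, sum_sum_ite_lt_ite_gt]
  refine sum_congr rfl fun i _ => sum_congr rfl fun j _ => ?_
  by_cases h : α i ≤ α j
  · simp [h, not_lt.2 h]
  · simp [h, lt_of_not_ge h]

theorem pairwiseLoss_le_of_orders_edges {m : ℕ} {s : Matrix (Fin m) (Fin m) ℝ}
    {α : Fin m → ℝ} (hα : ∀ i j, s j i < s i j → α j < α i) (β : Fin m → ℝ) :
    pairwiseLoss m s α ≤ pairwiseLoss m s β := by
  rw [pairwiseLoss_eq_sum_pairs, pairwiseLoss_eq_sum_pairs]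
  refine sum_le_sum fun i _ => sum_le_sum fun j _ => ?_
  split_ifs with _ hαij hβij hβij
  · rfl
  · exact not_lt.1 fun hs => (hα i j hs).not_ge hαij
  · exact not_lt.1 fun hs => hαij (hα j i hs).le
  · rfl
  · rfl

theorem diff_weighted_surrogate_consistent_general (m : ℕ)
    (s : Matrix (Fin m) (Fin m) ℝ)
    (hacyc : Irreflexive (Relation.TransGen fun i j : Fin m => s j i < s i j))
    (φ : ℝ → ℝ) (hanti : Antitone φ)
    (hderiv : deriv φ 0 < 0) :
    ∀ α : Fin m → ℝ,
      (∀ β : Fin m → ℝ, diffWeightedSurrogate m s φ α ≤ diffWeightedSurrogate m s φ β) →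
      (∀ i j, s j i < s i j → α j < α i) ∧
      (∀ β : Fin m → ℝ, pairwiseLoss m s α ≤ pairwiseLoss m s β) := fun _ hα =>
  have hedges := diffWeightedSurrogate_minimizer_orders_edges hacyc hanti
    (exists_lt_of_deriv_neg hderiv) hα
  ⟨hedges, pairwiseLoss_le_of_orders_edges hedges⟩

/-- Consistency of the difference-weighted pairwise surrogate in the acyclic case:
if the difference graph (edge `i → j` when `s i j > s j i`) is acyclic (its transitive
closure is irreflexive), and `φ` is convex, nonincreasing, differentiable with
`φ'(0) < 0`, then every minimizer of the surrogate orders `α i > α j` on every edge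
`i → j`, and consequently minimizes the pairwise 0–1 loss. -/
theorem diff_weighted_surrogate_consistent (m : ℕ)
    (s : Matrix (Fin m) (Fin m) ℝ) (hs : ∀ i j, 0 ≤ s i j)
    (hacyc : Irreflexive (Relation.TransGen fun i j : Fin m => s j i < s i j))
    (φ : ℝ → ℝ) (hconv : ConvexOn ℝ Set.univ φ) (hanti : Antitone φ)
    (hφ0 : ∀ x, 0 ≤ φ x) (hdiff : Differentiable ℝ φ) (hderiv : deriv φ 0 < 0) :
    ∀ α : Fin m → ℝ,
      (∀ β : Fin m → ℝ, diffWeightedSurrogate m s φ α ≤ diffWeightedSurrogate m s φ β) →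
      (∀ i j, s j i < s i j → α j < α i) ∧
      (∀ β : Fin m → ℝ, pairwiseLoss m s α ≤ pairwiseLoss m s β) :=
  diff_weighted_surrogate_consistent_general m s hacyc φ hanti hderiv
end

section
/- Suboptimality function positivity implies Fisher consistency (finite-range risk): suppose the conditional risk ℓ(·, λ_q) has finite range for each query q and the suboptimality function H(ε, λ) = inf_α { ℓ_φ(α,λ) - inf_{α'}ℓ_φ(α',λ) : ℓ(α,λ) - inf_{α'}ℓ(α',λ) ≥ ε } satisfies H(ε, λ_q) > 0 for all ε > 0 and all q with p_q > 0. Then for any sequence of measurable scoring functions f_n with R_φ(f_n) → R_φ* := inf_f R_φ(f), we have R(f_n) → R* := inf_f R(f), where R(f) = Σ_q p_q ℓ(f(q), λ_q) and R_φ(f) = Σ_q p_q ℓ_φ(f(q), λ_q). -/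
/-!
Write `ℓ q α` for the conditional risk and `I q = ⨅ α, ℓ q α`. Choosing near-minimisers query
by query shows `⨅ g, ∑' q, p q * ℓ q (g q) ≤ ∑' q, p q * I q`, with equality for the bounded
target loss. Since `p q₀ * (ℓ q₀ (f q₀) - I q₀)` is one nonnegative term of
`∑' q, p q * (ℓ q (f q) - I q)`, convergence of the surrogate risk to its infimum forces
`ℓ_φ(f n q₀) → I_φ q₀` whenever `p q₀ > 0`; positivity of the suboptimality function transfers
this to the target conditional risk, and dominated convergence (the target loss lies in
`[0, 1]`) sums over the queries.
-/

open MeasureTheory Filter Topology Set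

section WeightedInfimum

variable {ι A : Type*} [Nonempty A] {p : ι → ℝ} {ℓ : ι → A → ℝ}

lemma summable_mul_iInf_of_summable (hp0 : ∀ q, 0 ≤ p q) (hℓ0 : ∀ q α, 0 ≤ ℓ q α)
    {g : ι → A} (hg : Summable fun q => p q * ℓ q (g q)) :
    Summable fun q => p q * ⨅ α, ℓ q α :=
  hg.of_nonneg_of_le (fun q => mul_nonneg (hp0 q) (le_ciInf (hℓ0 q)))
    fun q => mul_le_mul_of_nonneg_left (ciInf_le ⟨0, forall_mem_range.2 (hℓ0 q)⟩ _) (hp0 q)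

lemma mul_sub_iInf_le_tsum_sub (hp0 : ∀ q, 0 ≤ p q) (hℓ0 : ∀ q α, 0 ≤ ℓ q α)
    {g : ι → A} (hg : Summable fun q => p q * ℓ q (g q)) (q₀ : ι) :
    p q₀ * (ℓ q₀ (g q₀) - ⨅ α, ℓ q₀ α) ≤
      ∑' q, p q * ℓ q (g q) - ∑' q, p q * ⨅ α, ℓ q α := by
  have hI := summable_mul_iInf_of_summable hp0 hℓ0 hg
  rw [← hg.tsum_sub hI, mul_sub]
  exact (hg.sub hI).le_tsum q₀ fun q _ =>
    sub_nonneg.2 (mul_le_mul_of_nonneg_left (ciInf_le ⟨0, forall_mem_range.2 (hℓ0 q)⟩ _) (hp0 q))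

lemma iInf_tsum_mul_le_tsum_mul_iInf (hp0 : ∀ q, 0 ≤ p q) (hp : Summable p)
    (hℓ0 : ∀ q α, 0 ≤ ℓ q α) (hI : Summable fun q => p q * ⨅ α, ℓ q α) :
    ⨅ g : ι → A, ∑' q, p q * ℓ q (g q) ≤ ∑' q, p q * ⨅ α, ℓ q α := by
  have hbdd : BddBelow (range fun g : ι → A => ∑' q, p q * ℓ q (g q)) :=
    ⟨0, forall_mem_range.2 fun g => tsum_nonneg fun q => mul_nonneg (hp0 q) (hℓ0 q _)⟩
  refine le_of_forall_pos_le_add fun ε hε => ?_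
  set P := ∑' q, p q
  have hP : 0 ≤ P := tsum_nonneg hp0
  set η := ε / (P + 1)
  have hη : 0 < η := div_pos hε (by linarith)
  choose g hg using fun q => exists_lt_of_ciInf_lt (lt_add_of_pos_right (⨅ α, ℓ q α) hη)
  have hgη : ∀ q, p q * ℓ q (g q) ≤ p q * (⨅ α, ℓ q α) + p q * η := fun q => by
    rw [← mul_add]; exact mul_le_mul_of_nonneg_left (hg q).le (hp0 q)
  have hsum : Summable fun q => p q * (⨅ α, ℓ q α) + p q * η := hI.add (hp.mul_right η)
  calc ⨅ g : ι → A, ∑' q, p q * ℓ q (g q)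
      ≤ ∑' q, p q * ℓ q (g q) := ciInf_le hbdd g
    _ ≤ ∑' q, (p q * (⨅ α, ℓ q α) + p q * η) :=
        (hsum.of_nonneg_of_le (fun q => mul_nonneg (hp0 q) (hℓ0 q _)) hgη).tsum_le_tsum hgη hsum
    _ = ∑' q, p q * (⨅ α, ℓ q α) + P * η := by
        rw [hI.tsum_add (hp.mul_right η), tsum_mul_right]
    _ ≤ ∑' q, p q * (⨅ α, ℓ q α) + ε := by
        gcongr
        rw [mul_div_assoc', div_le_iff₀ (by linarith)]
        nlinarith

lemma iInf_tsum_mul_eq_tsum_mul_iInf (hp0 : ∀ q, 0 ≤ p q) (hp : Summable p)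
    (hℓ0 : ∀ q α, 0 ≤ ℓ q α) (hsum : ∀ g : ι → A, Summable fun q => p q * ℓ q (g q)) :
    ⨅ g : ι → A, ∑' q, p q * ℓ q (g q) = ∑' q, p q * ⨅ α, ℓ q α := by
  have hI := summable_mul_iInf_of_summable hp0 hℓ0 (hsum fun _ => Classical.arbitrary A)
  refine le_antisymm (iInf_tsum_mul_le_tsum_mul_iInf hp0 hp hℓ0 hI) (le_ciInf fun g => ?_)
  exact hI.tsum_le_tsum
    (fun q => mul_le_mul_of_nonneg_left (ciInf_le ⟨0, forall_mem_range.2 (hℓ0 q)⟩ _) (hp0 q))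
    (hsum g)

lemma tendsto_sub_iInf_of_tendsto_iInf_tsum (hp0 : ∀ q, 0 ≤ p q) (hp : Summable p)
    (hℓ0 : ∀ q α, 0 ≤ ℓ q α) {f : ℕ → ι → A}
    (hf : ∀ n, Summable fun q => p q * ℓ q (f n q))
    (hconv : Tendsto (fun n => ∑' q, p q * ℓ q (f n q)) atTop
      (𝓝 (⨅ g : ι → A, ∑' q, p q * ℓ q (g q))))
    {q₀ : ι} (hq₀ : 0 < p q₀) :
    Tendsto (fun n => ℓ q₀ (f n q₀) - ⨅ α, ℓ q₀ α) atTop (𝓝 0) := by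
  have hI := summable_mul_iInf_of_summable hp0 hℓ0 (hf 0)
  set S := ∑' q, p q * ⨅ α, ℓ q α
  have hlim := (hconv.sub_const S).div_const (p q₀)
  refine tendsto_order.2 ⟨fun a ha => Eventually.of_forall fun n =>
    ha.trans_le (sub_nonneg.2 (ciInf_le ⟨0, forall_mem_range.2 (hℓ0 q₀)⟩ _)), fun a ha => ?_⟩
  have hlt : ((⨅ g : ι → A, ∑' q, p q * ℓ q (g q)) - S) / p q₀ < a :=
    (div_nonpos_of_nonpos_of_nonneg
      (sub_nonpos.2 (iInf_tsum_mul_le_tsum_mul_iInf hp0 hp hℓ0 hI)) hq₀.le).trans_lt ha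
  filter_upwards [hlim.eventually (gt_mem_nhds hlt)] with n hn
  exact lt_of_le_of_lt ((le_div_iff₀' hq₀).2 (mul_sub_iInf_le_tsum_sub hp0 hℓ0 (hf n) q₀)) hn

end WeightedInfimum

lemma tendsto_iInf_of_suboptimality_pos {A : Type*} {a b : A → ℝ} {x : ℕ → A}
    (ha : BddBelow (range a))
    (hH : ∀ ε > (0 : ℝ), ∃ δ > (0 : ℝ), ∀ α, ε ≤ a α - ⨅ α', a α' → δ ≤ b α - ⨅ α', b α')
    (hb : Tendsto (fun n => b (x n) - ⨅ α, b α) atTop (𝓝 0)) :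
    Tendsto (fun n => a (x n)) atTop (𝓝 (⨅ α, a α)) := by
  refine tendsto_order.2 ⟨fun c hc => Eventually.of_forall fun n => hc.trans_le (ciInf_le ha _),
    fun c hc => ?_⟩
  obtain ⟨δ, hδ, hδle⟩ := hH (c - ⨅ α, a α) (sub_pos.2 hc)
  filter_upwards [hb.eventually (gt_mem_nhds hδ)] with n hn
  by_contra! hcn
  exact (hδle (x n) (sub_le_sub_right hcn _)).not_gt hn

lemma integral_mem_Icc_zero_one {S : Type*} [MeasurableSpace S] {μ : Measure S}
    [IsProbabilityMeasure μ] {g : S → ℝ} (hg : ∀ s, g s ∈ Icc 0 1) :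
    ∫ s, g s ∂μ ∈ Icc 0 1 := by
  refine ⟨integral_nonneg fun s => (hg s).1, ?_⟩
  simpa using integral_mono_of_nonneg (ae_of_all μ fun s => (hg s).1) (integrable_const 1)
    (ae_of_all μ fun s => (hg s).2)

theorem suboptimality_positive_implies_fisher_consistency_general
    (m : ℕ) (S : Type*) [MeasurableSpace S]
    (lam : ℕ → Measure S) (hlam : ∀ q, IsProbabilityMeasure (lam q))
    (p : ℕ → ℝ) (hp0 : ∀ q, 0 ≤ p q) (hpsum : Summable p)
    (L : (Fin m → ℝ) → S → ℝ)
    (hL01 : ∀ α s, L α s ∈ Set.Icc (0 : ℝ) 1)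
    (φ : (Fin m → ℝ) → S → ℝ)
    (hφ0 : ∀ α s, 0 ≤ φ α s)
    (hH : ∀ q : ℕ, 0 < p q → ∀ ε > (0 : ℝ), ∃ δ > (0 : ℝ), ∀ α : Fin m → ℝ,
      ε ≤ (∫ s, L α s ∂lam q) - (⨅ α' : Fin m → ℝ, ∫ s, L α' s ∂lam q) →
      δ ≤ (∫ s, φ α s ∂lam q) - (⨅ α' : Fin m → ℝ, ∫ s, φ α' s ∂lam q))
    (f : ℕ → ℕ → Fin m → ℝ)
    (hRφsummable : ∀ n, Summable fun q => p q * ∫ s, φ (f n q) s ∂lam q)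
    (hconv : Tendsto (fun n => ∑' q, p q * ∫ s, φ (f n q) s ∂lam q) atTop
      (nhds (⨅ g : ℕ → Fin m → ℝ, ∑' q, p q * ∫ s, φ (g q) s ∂lam q))) :
    Tendsto (fun n => ∑' q, p q * ∫ s, L (f n q) s ∂lam q) atTop
      (nhds (⨅ g : ℕ → Fin m → ℝ, ∑' q, p q * ∫ s, L (g q) s ∂lam q)) := by
  have hℓ01 (q : ℕ) (α : Fin m → ℝ) : ∫ s, L α s ∂lam q ∈ Icc 0 1 :=
    haveI := hlam q; integral_mem_Icc_zero_one (hL01 α)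
  have hℓφ0 (q : ℕ) (α : Fin m → ℝ) : 0 ≤ ∫ s, φ α s ∂lam q := integral_nonneg (hφ0 α)
  have hbound (q : ℕ) (α : Fin m → ℝ) : ‖p q * ∫ s, L α s ∂lam q‖ ≤ p q := by
    rw [Real.norm_eq_abs, abs_of_nonneg (mul_nonneg (hp0 q) (hℓ01 q α).1)]
    exact mul_le_of_le_one_right (hp0 q) (hℓ01 q α).2
  rw [iInf_tsum_mul_eq_tsum_mul_iInf hp0 hpsum (fun q α => (hℓ01 q α).1)
    fun g => hpsum.of_norm_bounded fun q => hbound q (g q)]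
  refine tendsto_tsum_of_dominated_convergence hpsum (fun q => ?_)
    (Eventually.of_forall fun n q => hbound q (f n q))
  rcases (hp0 q).eq_or_lt with hq | hq
  · simp [← hq]
  · exact (tendsto_iInf_of_suboptimality_pos ⟨0, forall_mem_range.2 fun α => (hℓ01 q α).1⟩
      (hH q hq)
      (tendsto_sub_iInf_of_tendsto_iInf_tsum hp0 hpsum hℓφ0 hRφsummable hconv hq)).const_mul _

/-- Positivity of the suboptimality function implies Fisher consistency when the
conditional risk has finite range: queries are indexed by `ℕ` with probabilities `p q`,
`lam q` is the limiting structure distribution for query `q`, the target loss `L` takes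
values in `[0,1]`, the surrogate `φ` is nonnegative and integrable, each conditional
risk `α ↦ ∫ L α d(lam q)` has finite range, and for every query with `p q > 0` the
suboptimality function is positive: risk suboptimality `≥ ε` forces surrogate-risk
suboptimality `≥ δ(ε, q) > 0`. Then surrogate-risk convergence
`R_φ(f n) → inf R_φ` implies risk convergence `R(f n) → inf R`. -/
theorem suboptimality_positive_implies_fisher_consistency
    (m : ℕ) (S : Type*) [MeasurableSpace S]
    (lam : ℕ → Measure S) (hlam : ∀ q, IsProbabilityMeasure (lam q))
    (p : ℕ → ℝ) (hp0 : ∀ q, 0 ≤ p q) (hpsum : Summable p) (hp1 : (∑' q, p q) = 1)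
    (L : (Fin m → ℝ) → S → ℝ)
    (hLm : ∀ α, Measurable (L α)) (hL01 : ∀ α s, L α s ∈ Set.Icc (0 : ℝ) 1)
    (φ : (Fin m → ℝ) → S → ℝ)
    (hφ0 : ∀ α s, 0 ≤ φ α s) (hφint : ∀ α q, Integrable (φ α) (lam q))
    (hfin : ∀ q, (Set.range fun α : Fin m → ℝ => ∫ s, L α s ∂lam q).Finite)
    (hH : ∀ q : ℕ, 0 < p q → ∀ ε > (0 : ℝ), ∃ δ > (0 : ℝ), ∀ α : Fin m → ℝ,
      ε ≤ (∫ s, L α s ∂lam q) - (⨅ α' : Fin m → ℝ, ∫ s, L α' s ∂lam q) →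
      δ ≤ (∫ s, φ α s ∂lam q) - (⨅ α' : Fin m → ℝ, ∫ s, φ α' s ∂lam q))
    (f : ℕ → ℕ → Fin m → ℝ)
    (hRφsummable : ∀ n, Summable fun q => p q * ∫ s, φ (f n q) s ∂lam q)
    (hconv : Tendsto (fun n => ∑' q, p q * ∫ s, φ (f n q) s ∂lam q) atTop
      (nhds (⨅ g : ℕ → Fin m → ℝ, ∑' q, p q * ∫ s, φ (g q) s ∂lam q))) :
    Tendsto (fun n => ∑' q, p q * ∫ s, L (f n q) s ∂lam q) atTop
      (nhds (⨅ g : ℕ → Fin m → ℝ, ∑' q, p q * ∫ s, L (g q) s ∂lam q)) :=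
  suboptimality_positive_implies_fisher_consistency_general m S lam hlam p hp0 hpsum L hL01 φ hφ0 hH
    f hRφsummable hconv
end
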